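/- Let α ∈ (-1,1), ρ as above, and define γ by γ' = -α sin(2ρ), γ(0) = 0. Then γ is even and V-periodic, where V > 0 satisfies ρ(V) = π. -/

import Mathlib

/-!
Write `ρ' = F(ρ)` with `F(x) = √(1 - α² sin² (2x))`. For `α² < 1`, `F` is Lipschitz and
satisfies `F(kπ - y) = F(y)`, so by uniqueness of ODE solutions `ρ` is odd and
`ρ(V - v) = π - ρ(v)`.
Consequently `γ' = -α sin (2ρ)` is odd about `0` and about `V/2`, so `γ` is symmetric about both
points, and composing the two reflections gives the translation by `V`.
-/

open Real

theorem abs_sqrt_sub_sqrt_le {m a b : ℝ} (hm : 0 < m) (ha : m ≤ a) (hb : m ≤ b) :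
    |√a - √b| ≤ |a - b| / (2 * √m) := by
  have hsm : 0 < √m := sqrt_pos.2 hm
  have hsa : √m ≤ √a := sqrt_le_sqrt ha
  have hsb : √m ≤ √b := sqrt_le_sqrt hb
  have hdiff : a - b = (√a - √b) * (√a + √b) := by
    nlinarith [sq_sqrt (hm.le.trans ha), sq_sqrt (hm.le.trans hb)]
  rw [le_div_iff₀ (by positivity), hdiff, abs_mul, abs_of_pos (by linarith : 0 < √a + √b)]
  gcongr
  linarith

theorem abs_sin_sq_sub_sin_sq_le (x y : ℝ) : |sin x ^ 2 - sin y ^ 2| ≤ 2 * |x - y| := by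
  have hsum : |sin x + sin y| ≤ 2 := by
    rw [abs_le]
    constructor <;> linarith [neg_one_le_sin x, neg_one_le_sin y, sin_le_one x, sin_le_one y]
  calc |sin x ^ 2 - sin y ^ 2| = |sin x - sin y| * |sin x + sin y| := by
        rw [← abs_mul]; ring_nf
    _ ≤ |x - y| * 2 := mul_le_mul (abs_sin_sub_sin_le x y) hsum (abs_nonneg _) (abs_nonneg _)
    _ = 2 * |x - y| := mul_comm _ _

noncomputable def catenoidRhoField (α x : ℝ) : ℝ := √(1 - α ^ 2 * sin (2 * x) ^ 2)

theorem catenoidRhoField_int_mul_pi_sub (α : ℝ) (k : ℤ) (y : ℝ) :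
    catenoidRhoField α (k * π - y) = catenoidRhoField α y := by
  have : 2 * (k * π - y) = -(2 * y) + k * (2 * π) := by ring
  rw [catenoidRhoField, catenoidRhoField, this, sin_add_int_mul_two_pi, sin_neg, neg_sq]

theorem lipschitzWith_catenoidRhoField {α : ℝ} (hα : α ^ 2 < 1) :
    LipschitzWith (2 / √(1 - α ^ 2)).toNNReal (catenoidRhoField α) := by
  refine LipschitzWith.of_dist_le' fun x y => ?_
  have hlow : ∀ z : ℝ, 1 - α ^ 2 ≤ 1 - α ^ 2 * sin (2 * z) ^ 2 := fun z => by
    nlinarith [sin_sq_le_one (2 * z), sq_nonneg α]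
  have hinner : |(1 - α ^ 2 * sin (2 * x) ^ 2) - (1 - α ^ 2 * sin (2 * y) ^ 2)| ≤ 4 * |x - y| :=
    calc _ = |α ^ 2 * (sin (2 * y) ^ 2 - sin (2 * x) ^ 2)| := by ring_nf
      _ = α ^ 2 * |sin (2 * x) ^ 2 - sin (2 * y) ^ 2| := by
          rw [abs_mul, abs_sub_comm, abs_of_nonneg (sq_nonneg α)]
      _ ≤ 1 * (2 * |2 * x - 2 * y|) := by
          gcongr; exact abs_sin_sq_sub_sin_sq_le _ _
      _ = 4 * |x - y| := by rw [← mul_sub, abs_mul, abs_two]; ring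
  have hm : 0 < 1 - α ^ 2 := by linarith
  rw [dist_eq_norm, dist_eq_norm, Real.norm_eq_abs, Real.norm_eq_abs]
  calc _ ≤ _ / (2 * √(1 - α ^ 2)) := abs_sqrt_sub_sqrt_le hm (hlow x) (hlow y)
    _ ≤ 4 * |x - y| / (2 * √(1 - α ^ 2)) := by gcongr
    _ = 2 / √(1 - α ^ 2) * |x - y| := by field_simp; ring

/-- `v ↦ c - ρ (a - v)` solves the same ODE and agrees with `ρ` at `0`. -/
theorem ODE_solution_apply_sub {F : ℝ → ℝ} {K : NNReal} (hF : LipschitzWith K F) {c : ℝ}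
    (hFc : ∀ y, F (c - y) = F y) {ρ : ℝ → ℝ} (hρ : ∀ v, HasDerivAt ρ (F (ρ v)) v) {a : ℝ}
    (ha : ρ 0 + ρ a = c) (v : ℝ) : ρ (a - v) = c - ρ v := by
  have hrefl : ∀ t, HasDerivAt (fun v => c - ρ (a - v)) (F (c - ρ (a - t))) t := fun t => by
    rw [hFc]
    simpa using ((hρ (a - t)).comp t ((hasDerivAt_id t).const_sub a)).const_sub c
  have hunique := ODE_solution_unique_univ (v := fun _ => F) (s := fun _ => Set.univ) (t₀ := 0)
    (fun _ => hF.lipschitzOnWith) (fun t => ⟨hrefl t, trivial⟩) (fun t => ⟨hρ t, trivial⟩)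
    (by simp only [sub_zero]; linarith)
  have := congrFun hunique v
  linarith

/-- `f (a - v) - f v` is constant and changes sign under `v ↦ a - v`. -/
theorem apply_sub_eq_of_deriv_apply_sub_eq_neg {f f' : ℝ → ℝ} {a : ℝ}
    (hf : ∀ v, HasDerivAt f (f' v) v) (hf' : ∀ v, f' (a - v) = -f' v) (v : ℝ) :
    f (a - v) = f v := by
  have hderiv : ∀ t, HasDerivAt (fun v => f (a - v) - f v) 0 t := fun t => by
    have h := ((hf (a - t)).comp t ((hasDerivAt_id' t).const_sub a)).fun_sub (hf t)
    rwa [hf' t, mul_neg_one, neg_neg, sub_self] at h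
  have hconst : ∀ x y, f (a - x) - f x = f (a - y) - f y := fun x y =>
    is_const_of_deriv_eq_zero (fun t => (hderiv t).differentiableAt) (fun t => (hderiv t).deriv)
      x y
  have h0a := hconst 0 a
  have h0v := hconst 0 v
  simp only [sub_zero, sub_self] at h0a h0v
  linarith

theorem apply_sub_eq_of_hasDerivAt_neg_mul_sin {α a : ℝ} {ρ γ : ℝ → ℝ} {k : ℤ}
    (hρ : ∀ v, ρ (a - v) = k * π - ρ v) (hγ : ∀ v, HasDerivAt γ (-α * sin (2 * ρ v)) v)
    (v : ℝ) :
    γ (a - v) = γ v := by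
  refine apply_sub_eq_of_deriv_apply_sub_eq_neg hγ (fun t => ?_) v
  have : 2 * (k * π - ρ t) = -(2 * ρ t) + k * (2 * π) := by ring
  rw [hρ t, this, sin_add_int_mul_two_pi, sin_neg]
  ring

theorem catenoid_gamma_even_periodic_general
    (α : ℝ) (hα : α ∈ Set.Ioo (-1 : ℝ) 1) (ρ γ : ℝ → ℝ)
    (hρ : ∀ v : ℝ, HasDerivAt ρ (Real.sqrt (1 - α ^ 2 * Real.sin (2 * ρ v) ^ 2)) v)
    (hρ0 : ρ 0 = 0) (V : ℝ) (hρV : ρ V = Real.pi)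
    (hγ : ∀ v : ℝ, HasDerivAt γ (-α * Real.sin (2 * ρ v)) v) :
    (∀ v : ℝ, γ (-v) = γ v) ∧ (∀ v : ℝ, γ (v + V) = γ v) := by
  have hα2 : α ^ 2 < 1 := by nlinarith [hα.1, hα.2]
  have hF := lipschitzWith_catenoidRhoField hα2
  have hρ_odd : ∀ v, ρ (0 - v) = ((0 : ℤ) : ℝ) * π - ρ v :=
    ODE_solution_apply_sub hF (catenoidRhoField_int_mul_pi_sub α 0) hρ (by simp [hρ0])
  have hρ_refl : ∀ v, ρ (V - v) = ((1 : ℤ) : ℝ) * π - ρ v :=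
    ODE_solution_apply_sub hF (catenoidRhoField_int_mul_pi_sub α 1) hρ (by simp [hρ0, hρV])
  have hγ_even := apply_sub_eq_of_hasDerivAt_neg_mul_sin hρ_odd hγ
  have hγ_refl := apply_sub_eq_of_hasDerivAt_neg_mul_sin hρ_refl hγ
  refine ⟨fun v => by simpa using hγ_even v, fun v => ?_⟩
  rw [show v + V = V - -v by ring, hγ_refl, ← hγ_even, zero_sub, neg_neg]

theorem catenoid_gamma_even_periodic
    (α : ℝ) (hα : α ∈ Set.Ioo (-1 : ℝ) 1) (ρ γ : ℝ → ℝ)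
    (hρ : ∀ v : ℝ, HasDerivAt ρ (Real.sqrt (1 - α ^ 2 * Real.sin (2 * ρ v) ^ 2)) v)
    (hρ0 : ρ 0 = 0) (V : ℝ) (hV : 0 < V) (hρV : ρ V = Real.pi)
    (hγ : ∀ v : ℝ, HasDerivAt γ (-α * Real.sin (2 * ρ v)) v)
    (hγ0 : γ 0 = 0) :
    (∀ v : ℝ, γ (-v) = γ v) ∧ (∀ v : ℝ, γ (v + V) = γ v) :=
  catenoid_gamma_even_periodic_general α hα ρ γ hρ hρ0 V hρV hγ
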